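/- Let V be finite-dimensional, R(x) ∈ End(V ⊗ V) invertible with R(x)^{t₁} invertible, K⁻(x), K'(x) ∈ End(V), M ∈ GL(V), r ∈ ℂ^×, z ∈ (ℂ^×)^N. Assume crossing symmetry M₂^{-1} R_{12}(r²x)^{-1} M₂ ∝ R̃_{12}(x) and [R(x), M ⊗ M] = 0, and assume K'(±r^{-1}) ∝ M. Define 𝒯(x;z) := Tr₀ [K'₀(x) R_{01}(1/(xz₁))^{-1} ⋯ R_{0N}(1/(xz_N))^{-1} K⁻₀(x) R_{0N}(x/z_N) ⋯ R_{01}(x/z₁)]. Then 𝒯(±r^{-1}; z) ∝ (Tr(K⁻(±r^{-1}) M)) · Id_{V^{⊗N}}. -/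

import Mathlib

/-!
At `x = ±r⁻¹` one has `(x z_i)⁻¹ = r² · x / z_i`, so crossing symmetry together with
`[R, M ⊗ M] = 0` rewrites every factor `R_{0i}(1/(x z_i))⁻¹` as a nonzero multiple of
`M₀⁻¹ R̃_{0i}(x / z_i) M₀`. These conjugations telescope, and since `K'(x) ∝ M` the outer `M₀⁻¹`
cancels against `K'₀(x)`, leaving `Tr₀ [R̃_{01} ⋯ R̃_{0N} (M K⁻(x))₀ R_{0N} ⋯ R_{01}]`.
Finally `Tr₀ (R̃_{0j} Z R_{0j}) = Tr₀ Z` whenever `Z` acts trivially on site `j`, so the sites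
can be peeled off one at a time, leaving `Tr (M K⁻(x)) · Id`.
-/

open Matrix Kronecker

noncomputable section

abbrev MatV (n : ℕ) := Matrix (Fin n) (Fin n) ℂ
abbrev Sq (n : ℕ) := Matrix (Fin n × Fin n) (Fin n × Fin n) ℂ

/-- The flip operator `P` on `V ⊗ V`. -/
def flipM (n : ℕ) : Sq n := Matrix.of fun p q => if p.1 = q.2 ∧ p.2 = q.1 then (1 : ℂ) else 0

/-- `R₂₁ = P R P`. -/
def swapM {n : ℕ} (R : Sq n) : Sq n := Matrix.of fun p q => R (p.2, p.1) (q.2, q.1)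

/-- Partial transpose in the first tensor factor. -/
def pt1 {n : ℕ} (R : Sq n) : Sq n := Matrix.of fun p q => R (q.1, p.2) (p.1, q.2)

/-- `R̃ = ((R^{t₁})⁻¹)^{t₁}`. -/
def rtil {n : ℕ} (R : Sq n) : Sq n := pt1 (pt1 R)⁻¹

/-- `K ⊗ Id` acting in the first factor. -/
def k1M {n : ℕ} (K : MatV n) : Sq n := Matrix.of fun p q => if p.2 = q.2 then K p.1 q.1 else 0

/-- `Id ⊗ K` acting in the second factor. -/
def k2M {n : ℕ} (K : MatV n) : Sq n := Matrix.of fun p q => if p.1 = q.1 then K p.2 q.2 else 0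

/-- Partial trace over the first tensor factor. -/
def ptr0 {n : ℕ} (X : Sq n) : MatV n := Matrix.of fun i j => ∑ a : Fin n, X (a, i) (a, j)

/-- `φ_R(Y)(x) = Tr₀ (Y₀(x) P₀₁ R₀₁(x²))`. -/
def phiR {n : ℕ} (R : ℂ → Sq n) (K : ℂ → MatV n) : ℂ → MatV n :=
  fun x => ptr0 (k1M (K x) * flipM n * R (x ^ 2))

abbrev Cu (n : ℕ) := Matrix (Fin n × Fin n × Fin n) (Fin n × Fin n × Fin n) ℂ

def e12 {n : ℕ} (R : Sq n) : Cu n :=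
  Matrix.of fun p q => if p.2.2 = q.2.2 then R (p.1, p.2.1) (q.1, q.2.1) else 0
def e13 {n : ℕ} (R : Sq n) : Cu n :=
  Matrix.of fun p q => if p.2.1 = q.2.1 then R (p.1, p.2.2) (q.1, q.2.2) else 0
def e23 {n : ℕ} (R : Sq n) : Cu n :=
  Matrix.of fun p q => if p.1 = q.1 then R (p.2.1, p.2.2) (q.2.1, q.2.2) else 0

/-- The Yang–Baxter equation `R₁₂(x/y) R₁₃(x) R₂₃(y) = R₂₃(y) R₁₃(x) R₁₂(x/y)`. -/
def YBEprop {n : ℕ} (R : ℂ → Sq n) : Prop :=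
  ∀ x y : ℂ, e12 (R (x / y)) * e13 (R x) * e23 (R y) = e23 (R y) * e13 (R x) * e12 (R (x / y))

/-- The left reflection equation. -/
def LREprop {n : ℕ} (R : ℂ → Sq n) (K : ℂ → MatV n) : Prop :=
  ∀ x y : ℂ, R (x / y) * k1M (K x) * swapM (R (x * y)) * k2M (K y)
    = k2M (K y) * R (x * y) * k1M (K x) * swapM (R (x / y))

/-- The right reflection equation. -/
def RREprop {n : ℕ} (R : ℂ → Sq n) (K : ℂ → MatV n) : Prop :=
  ∀ x y : ℂ, swapM (R (x / y)) * k1M (K x) * R (x * y) * k2M (K y)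
    = k2M (K y) * swapM (R (x * y)) * k1M (K x) * R (x / y)

/-- The dual reflection equation. -/
def DREprop {n : ℕ} (R : ℂ → Sq n) (K : ℂ → MatV n) : Prop :=
  ∀ x y : ℂ, (R (x / y))⁻¹ * k1M (K x) * swapM (rtil (R (x * y))) * k2M (K y)
    = k2M (K y) * rtil (R (x * y)) * k1M (K x) * ((swapM (R (x / y)))⁻¹)ᵀ

abbrev StM (n N : ℕ) := Matrix (Fin N → Fin n) (Fin N → Fin n) ℂ
abbrev BigM (n N : ℕ) := Matrix (Fin n × (Fin N → Fin n)) (Fin n × (Fin N → Fin n)) ℂ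

/-- `K` acting in the auxiliary factor `0`. -/
def aux0 {n N : ℕ} (K : MatV n) : BigM n N :=
  Matrix.of fun p q => if p.2 = q.2 then K p.1 q.1 else 0

/-- A two-site operator acting in the auxiliary factor `0` and site `j`. -/
def aux0J {n N : ℕ} (j : Fin N) (R : Sq n) : BigM n N :=
  Matrix.of fun p q =>
    if ∀ l, l ≠ j → p.2 l = q.2 l then R (p.1, p.2 j) (q.1, q.2 j) else 0

/-- `K` acting at site `j` of the state space `V^{⊗N}`. -/
def siteK {n N : ℕ} (j : Fin N) (K : MatV n) : StM n N :=
  Matrix.of fun p q => if ∀ l, l ≠ j → p l = q l then K (p j) (q j) else 0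

/-- A two-site operator acting at sites `j` and `k` of `V^{⊗N}`. -/
def siteJK {n N : ℕ} (j k : Fin N) (R : Sq n) : StM n N :=
  Matrix.of fun p q =>
    if ∀ l, l ≠ j → l ≠ k → p l = q l then R (p j, p k) (q j, q k) else 0

/-- Partial trace over the auxiliary factor. -/
def ptrA {n N : ℕ} (X : BigM n N) : StM n N :=
  Matrix.of fun p q => ∑ a : Fin n, X (a, p) (a, q)

/-- Descending ordered product `f(k-1) * ⋯ * f(0)`. -/
def pdesc {M : Type*} [Monoid M] {k : ℕ} (f : Fin k → M) : M := ((List.ofFn f).reverse).prod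

/-- Ascending ordered product `f(0) * ⋯ * f(k-1)`. -/
def pasc {M : Type*} [Monoid M] {k : ℕ} (f : Fin k → M) : M := (List.ofFn f).prod

/-- Inhomogeneous boundary transfer matrix
`𝒯(x;z) = Tr₀ [K'₀(x) R₀₁(1/(xz₁))⁻¹ ⋯ R₀N(1/(xz_N))⁻¹ K⁻₀(x) R₀N(x/z_N) ⋯ R₀₁(x/z₁)]`. -/
def Tbdy {n N : ℕ} (R : ℂ → Sq n) (Kpr Km : ℂ → MatV n) (z : Fin N → ℂ) (x : ℂ) : StM n N :=
  ptrA (aux0 (Kpr x)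
    * pasc (fun i => (aux0J i (R ((x * z i)⁻¹)))⁻¹)
    * aux0 (Km x)
    * pdesc fun i => aux0J i (R (x / z i)))

/-- Boundary qKZ transport matrix at `p = 1`:
`𝒜_i(z) = R_{i,i-1}(z_i/z_{i-1}) ⋯ R_{i1}(z_i/z₁) K⁺_i(z_i) R_{1i}(z₁z_i) ⋯ R_{i-1,i}(z_{i-1}z_i)
  R_{i+1,i}(z_{i+1}z_i) ⋯ R_{Ni}(z_Nz_i) K⁻_i(z_i) R_{Ni}(z_N/z_i)⁻¹ ⋯ R_{i+1,i}(z_{i+1}/z_i)⁻¹`. -/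
def Abdy {n N : ℕ} (R : ℂ → Sq n) (Kp Km : ℂ → MatV n) (z : Fin N → ℂ) (i : Fin N) : StM n N :=
  pdesc (fun j : Fin i.1 =>
      siteJK i ⟨j.1, j.isLt.trans i.isLt⟩ (R (z i / z ⟨j.1, j.isLt.trans i.isLt⟩)))
  * siteK i (Kp (z i))
  * pasc (fun j : Fin i.1 =>
      siteJK ⟨j.1, j.isLt.trans i.isLt⟩ i (R (z ⟨j.1, j.isLt.trans i.isLt⟩ * z i)))
  * pasc (fun k : Fin (N - (i.1 + 1)) =>
      siteJK ⟨i.1 + 1 + k.1, by have := k.isLt; omega⟩ i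
        (R (z ⟨i.1 + 1 + k.1, by have := k.isLt; omega⟩ * z i)))
  * siteK i (Km (z i))
  * pdesc (fun k : Fin (N - (i.1 + 1)) =>
      (siteJK ⟨i.1 + 1 + k.1, by have := k.isLt; omega⟩ i
        (R (z ⟨i.1 + 1 + k.1, by have := k.isLt; omega⟩ / z i)))⁻¹)

theorem Matrix.commute_nonsing_inv_right {m α : Type*} [Fintype m] [DecidableEq m] [CommRing α]
    {A B : Matrix m m α} (h : Commute A B) : Commute A B⁻¹ := by
  by_cases hB : IsUnit B.det
  · exact h.units_inv_right (u := B.nonsingInvUnit hB)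
  · rw [nonsing_inv_apply_not_isUnit _ hB]
    exact Commute.zero_right A

theorem conj_eq_conj_of_commute_mul {G : Type*} [Monoid G] {a a' b b' X : G}
    (ha : a' * a = 1) (hb : b * b' = 1) (h : Commute X (a * b)) : b * X * b' = a' * X * a := by
  calc b * X * b' = a' * ((a * b) * X) * b' := by rw [mul_assoc a, ← mul_assoc a', ha, one_mul]
    _ = a' * X * a := by rw [← h.eq, mul_assoc, mul_assoc, mul_assoc, hb, mul_one, mul_assoc]

section OrderedProducts

variable {G : Type*} [Monoid G]

theorem pasc_zero (f : Fin 0 → G) : pasc f = 1 := rfl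

theorem pdesc_zero (f : Fin 0 → G) : pdesc f = 1 := rfl

theorem pasc_succ {k : ℕ} (f : Fin (k + 1) → G) : pasc f = f 0 * pasc fun i => f i.succ := by
  simp [pasc, List.ofFn_succ]

theorem pdesc_succ {k : ℕ} (f : Fin (k + 1) → G) : pdesc f = (pdesc fun i => f i.succ) * f 0 := by
  simp [pdesc, List.ofFn_succ]

theorem pasc_conj {k : ℕ} {a b : G} (hab : a * b = 1) (hba : b * a = 1) (f : Fin k → G) :
    pasc (fun i => a * f i * b) = a * pasc f * b := by
  induction k with
  | zero => rw [pasc_zero, pasc_zero, mul_one, hab]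
  | succ k ih =>
    rw [pasc_succ, pasc_succ f, ih, mul_assoc, mul_assoc a (f 0), ← mul_assoc b, ← mul_assoc b,
      hba, one_mul, ← mul_assoc, ← mul_assoc, mul_assoc a]

theorem pasc_smul {A : Type*} [CommMonoid A] [MulAction A G] [IsScalarTower A G G]
    [SMulCommClass A G G] {k : ℕ} (c : Fin k → A) (f : Fin k → G) :
    pasc (fun i => c i • f i) = (∏ i, c i) • pasc f := by
  induction k with
  | zero => rw [pasc_zero, pasc_zero, Finset.univ_eq_empty, Finset.prod_empty, one_smul]
  | succ k ih => rw [pasc_succ, pasc_succ f, ih, smul_mul_smul, Fin.prod_univ_succ]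

end OrderedProducts

section TwoSites

variable {n : ℕ}

theorem k2M_eq_kronecker (K : MatV n) : k2M K = 1 ⊗ₖ K := by
  ext ⟨a, b⟩ ⟨c, d⟩
  simp [k2M, one_apply]

theorem pt1_kronecker_mul_mul_kronecker (A B C D : MatV n) (X : Sq n) :
    pt1 (A ⊗ₖ B * X * C ⊗ₖ D) = Cᵀ ⊗ₖ B * pt1 X * Aᵀ ⊗ₖ D := by
  ext ⟨p₁, p₂⟩ ⟨q₁, q₂⟩
  simp only [pt1, of_apply, mul_apply, Fintype.sum_prod_type, kroneckerMap_apply,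
    transpose_apply, Finset.sum_mul]
  rw [Finset.sum_comm]
  refine (Finset.sum_congr rfl fun _ _ => Finset.sum_comm).trans ?_
  rw [Finset.sum_comm]
  refine Finset.sum_congr rfl fun _ _ => Finset.sum_congr rfl fun _ _ =>
    Finset.sum_congr rfl fun _ _ => Finset.sum_congr rfl fun _ _ => by ring

theorem commute_rtil_kronecker_inv {R : Sq n} {A B : MatV n} (h : Commute R (A ⊗ₖ B)) :
    Commute (rtil R) (A⁻¹ ⊗ₖ B⁻¹) := by
  have ht : Aᵀ ⊗ₖ 1 * pt1 R * 1 ⊗ₖ B = 1 ⊗ₖ B * pt1 R * Aᵀ ⊗ₖ 1 := by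
    have hl := pt1_kronecker_mul_mul_kronecker 1 1 A B R
    have hr := pt1_kronecker_mul_mul_kronecker A B 1 1 R
    rw [one_kronecker_one, one_mul, transpose_one] at hl
    rw [one_kronecker_one, mul_one, transpose_one] at hr
    rw [← hl, ← hr, h.eq]
  have hinv := congrArg (fun X => pt1 X⁻¹) ht
  simp only [Matrix.mul_inv_rev, inv_kronecker, inv_one, ← mul_assoc,
    pt1_kronecker_mul_mul_kronecker, transpose_nonsing_inv, transpose_transpose, transpose_one,
    one_kronecker_one, one_mul, mul_one] at hinv
  exact hinv.symm

theorem commute_rtil_kronecker {R : Sq n} {A B : MatV n} (hA : IsUnit A) (hB : IsUnit B)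
    (h : Commute R (A ⊗ₖ B)) : Commute (rtil R) (A ⊗ₖ B) := by
  have h' : Commute R (A⁻¹ ⊗ₖ B⁻¹) := inv_kronecker A B ▸ commute_nonsing_inv_right h
  simpa only [nonsing_inv_nonsing_inv _ ((isUnit_iff_isUnit_det _).mp hA),
    nonsing_inv_nonsing_inv _ ((isUnit_iff_isUnit_det _).mp hB)] using commute_rtil_kronecker_inv h'

/-- Entrywise this is `(S^{t₁})⁻¹ S^{t₁} = 1`. -/
theorem ptr0_rtil_mul_kronecker_one_mul {S : Sq n} (hS : IsUnit (pt1 S)) (W : MatV n) :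
    ptr0 (rtil S * W ⊗ₖ 1 * S) = trace W • 1 := by
  ext x y
  have hinv : ∀ b c,
      ∑ a, ∑ u, rtil S (a, x) (b, u) * S (c, u) (a, y) = (1 : Sq n) (b, x) (c, y) := by
    intro b c
    rw [← nonsing_inv_mul _ ((isUnit_iff_isUnit_det _).mp hS), mul_apply, Fintype.sum_prod_type]
    rfl
  calc ptr0 (rtil S * W ⊗ₖ 1 * S) x y
      = ∑ a, ∑ c, ∑ b, W b c * ∑ u, rtil S (a, x) (b, u) * S (c, u) (a, y) := by
        simp only [ptr0, of_apply, mul_apply, Fintype.sum_prod_type, kroneckerMap_apply, one_apply,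
          mul_ite, mul_one, mul_zero, Finset.sum_ite_eq', Finset.mem_univ, if_true,
          Finset.mul_sum, Finset.sum_mul]
        refine Finset.sum_congr rfl fun _ _ => Finset.sum_congr rfl fun _ _ => ?_
        rw [Finset.sum_comm]
        refine Finset.sum_congr rfl fun _ _ => Finset.sum_congr rfl fun _ _ => by ring
    _ = ∑ b, ∑ c, W b c * ∑ a, ∑ u, rtil S (a, x) (b, u) * S (c, u) (a, y) := by
        rw [Finset.sum_comm]
        refine (Finset.sum_congr rfl fun _ _ => Finset.sum_comm).trans ?_
        rw [Finset.sum_comm]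
        simp only [Finset.mul_sum]
    _ = ∑ b, ∑ c, W b c * (1 : Sq n) (b, x) (c, y) := by simp only [hinv]
    _ = (trace W • (1 : MatV n)) x y := by
        simp [one_apply, Prod.ext_iff, ite_and, trace]

theorem inv_eq_smul_conj_rtil {R R' : Sq n} {M : MatV n} {c : ℂ} (hM : IsUnit M)
    (hR : Commute R (M ⊗ₖ M)) (hcross : (k2M M)⁻¹ * R'⁻¹ * k2M M = c • rtil R) :
    R'⁻¹ = c • (M⁻¹ ⊗ₖ 1 * rtil R * M ⊗ₖ 1) := by
  have hMd := (isUnit_iff_isUnit_det M).mp hM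
  rw [k2M_eq_kronecker, inv_kronecker, inv_one] at hcross
  have hright : (1 : MatV n) ⊗ₖ M * 1 ⊗ₖ M⁻¹ = 1 := by
    rw [← mul_kronecker_mul, one_mul, mul_nonsing_inv _ hMd, one_kronecker_one]
  have hleft : M⁻¹ ⊗ₖ (1 : MatV n) * M ⊗ₖ 1 = 1 := by
    rw [← mul_kronecker_mul, one_mul, nonsing_inv_mul _ hMd, one_kronecker_one]
  have hconj : 1 ⊗ₖ M * rtil R * 1 ⊗ₖ M⁻¹ = M⁻¹ ⊗ₖ 1 * rtil R * M ⊗ₖ 1 := by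
    refine conj_eq_conj_of_commute_mul hleft hright ?_
    rw [← mul_kronecker_mul, mul_one, one_mul]
    exact commute_rtil_kronecker hM hM hR
  calc R'⁻¹ = 1 ⊗ₖ M * (1 ⊗ₖ M⁻¹ * R'⁻¹ * 1 ⊗ₖ M) * 1 ⊗ₖ M⁻¹ := by
        simp only [← mul_assoc, hright, one_mul]
        rw [mul_assoc, hright, mul_one]
    _ = c • (M⁻¹ ⊗ₖ 1 * rtil R * M ⊗ₖ 1) := by
        rw [hcross, mul_smul_comm, smul_mul_assoc, hconj]

end TwoSites

section Chain

variable {n N : ℕ}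

theorem sum_ite_forall_ne_eq (j : Fin N) (p : Fin N → Fin n) (f : (Fin N → Fin n) → ℂ) :
    ∑ m, (if ∀ l, l ≠ j → p l = m l then f m else 0) = ∑ u, f (Function.update p j u) := by
  classical
  rw [← Finset.sum_filter, ← Finset.sum_image fun u _ v _ h => Function.update_injective p j h]
  congr 1
  ext m
  simp [Function.update_eq_iff]

theorem sum_ite_forall_ne_eq' (j : Fin N) (q : Fin N → Fin n) (f : (Fin N → Fin n) → ℂ) :
    ∑ m, (if ∀ l, l ≠ j → m l = q l then f m else 0) = ∑ u, f (Function.update q j u) := by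
  simp only [← sum_ite_forall_ne_eq j q f, @eq_comm _ (q _)]

theorem forall_ne_update_eq_iff (j : Fin N) (p q : Fin N → Fin n) (u : Fin n) :
    (∀ l, l ≠ j → Function.update p j u l = q l) ↔ ∀ l, l ≠ j → p l = q l :=
  forall₂_congr fun l hl => by rw [Function.update_of_ne hl]

theorem forall_ne_update_eq_iff_of_ne {i j : Fin N} (hij : i ≠ j) (p q : Fin N → Fin n)
    (u : Fin n) :
    (∀ l, l ≠ i → Function.update p j u l = q l) ↔ u = q j ∧ ∀ l, l ≠ i → l ≠ j → p l = q l := by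
  simp only [Function.update_apply]
  refine ⟨fun h => ⟨by simpa using h j hij.symm, fun l hi hj => by simpa [hj] using h l hi⟩, ?_⟩
  rintro ⟨rfl, h⟩ l hl
  split_ifs with hlj
  · rw [hlj]
  · exact h l hl hlj

theorem forall_ne_eq_update_iff_of_ne {i j : Fin N} (hij : i ≠ j) (p q : Fin N → Fin n)
    (u : Fin n) :
    (∀ l, l ≠ i → p l = Function.update q j u l) ↔ p j = u ∧ ∀ l, l ≠ i → l ≠ j → p l = q l := by
  rw [forall₂_congr fun _ _ => eq_comm, forall_ne_update_eq_iff_of_ne hij]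
  exact and_congr eq_comm (forall₃_congr fun _ _ _ => eq_comm)

theorem eq_iff_forall_ne_and (j : Fin N) (p q : Fin N → Fin n) :
    p = q ↔ (∀ l, l ≠ j → p l = q l) ∧ p j = q j := by
  refine ⟨fun h => h ▸ ⟨fun _ _ => rfl, rfl⟩, fun ⟨h, hj⟩ => funext fun l => ?_⟩
  by_cases hl : l = j
  · exact hl ▸ hj
  · exact h l hl

theorem aux0_eq_kronecker (K : MatV n) : aux0 (N := N) K = K ⊗ₖ 1 := by
  ext ⟨a, p⟩ ⟨b, q⟩
  simp [aux0, one_apply]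

theorem aux0_mul (A B : MatV n) : aux0 (N := N) (A * B) = aux0 A * aux0 B := by
  simp only [aux0_eq_kronecker, ← mul_kronecker_mul, mul_one]

theorem aux0_smul (c : ℂ) (K : MatV n) : aux0 (N := N) (c • K) = c • aux0 K := by
  simp only [aux0_eq_kronecker, smul_kronecker]

theorem ptrA_smul (c : ℂ) (X : BigM n N) : ptrA (c • X) = c • ptrA X := by
  ext p q
  simp [ptrA, Finset.mul_sum]

theorem aux0J_kronecker_one (j : Fin N) (K : MatV n) : aux0J j (K ⊗ₖ 1) = aux0 K := by
  ext ⟨a, p⟩ ⟨b, q⟩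
  simp [aux0J, aux0, one_apply, eq_iff_forall_ne_and j p q, ite_and]

theorem aux0J_one (j : Fin N) : aux0J j (1 : Sq n) = 1 := by
  rw [← one_kronecker_one, aux0J_kronecker_one, aux0_eq_kronecker, one_kronecker_one]

theorem aux0J_smul (j : Fin N) (c : ℂ) (X : Sq n) : aux0J j (c • X) = c • aux0J j X := by
  ext ⟨a, p⟩ ⟨b, q⟩
  simp [aux0J]

theorem aux0J_mul_apply (j : Fin N) (X : Sq n) (Z : BigM n N) (a : Fin n)
    (p : Fin N → Fin n) (y : Fin n × (Fin N → Fin n)) :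
    (aux0J j X * Z) (a, p) y = ∑ b, ∑ u, X (a, p j) (b, u) * Z (b, Function.update p j u) y := by
  simp only [mul_apply, Fintype.sum_prod_type, aux0J, of_apply, ite_mul, zero_mul,
    sum_ite_forall_ne_eq j p, Function.update_self]

theorem mul_aux0J_apply (j : Fin N) (X : Sq n) (Z : BigM n N) (b : Fin n)
    (q : Fin N → Fin n) (x : Fin n × (Fin N → Fin n)) :
    (Z * aux0J j X) x (b, q) = ∑ a, ∑ u, Z x (a, Function.update q j u) * X (a, u) (b, q j) := by
  simp only [mul_apply, Fintype.sum_prod_type, aux0J, of_apply, mul_ite, mul_zero,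
    sum_ite_forall_ne_eq' j q, Function.update_self]

theorem aux0J_mul (j : Fin N) (X Y : Sq n) : aux0J j (X * Y) = aux0J j X * aux0J j Y := by
  ext ⟨a, p⟩ ⟨c, q⟩
  rw [aux0J_mul_apply]
  simp [aux0J, forall_ne_update_eq_iff, mul_apply, Fintype.sum_prod_type]

theorem aux0J_inv {j : Fin N} {X : Sq n} (hX : IsUnit X) : (aux0J j X)⁻¹ = aux0J j X⁻¹ :=
  inv_eq_right_inv <| by
    rw [← aux0J_mul, mul_nonsing_inv _ ((isUnit_iff_isUnit_det X).mp hX), aux0J_one]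

/-- Commuting with every operator on site `j` means, by Schur's lemma, `Z = Z' ⊗ Id_j`. -/
def ActsTriviallyAt (j : Fin N) (Z : BigM n N) : Prop :=
  ∀ K : MatV n, Commute Z (aux0J j (1 ⊗ₖ K))

theorem mul_aux0J_one_kronecker_apply (j : Fin N) (Z : BigM n N) (K : MatV n) (a b : Fin n)
    (p q : Fin N → Fin n) :
    (Z * aux0J j (1 ⊗ₖ K)) (a, p) (b, q)
      = ∑ u, Z (a, p) (b, Function.update q j u) * K u (q j) := by
  simp [mul_aux0J_apply, one_apply, Finset.sum_ite_irrel]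

theorem aux0J_one_kronecker_mul_apply (j : Fin N) (Z : BigM n N) (K : MatV n) (a b : Fin n)
    (p q : Fin N → Fin n) :
    (aux0J j (1 ⊗ₖ K) * Z) (a, p) (b, q)
      = ∑ u, K (p j) u * Z (a, Function.update p j u) (b, q) := by
  simp [aux0J_mul_apply, one_apply, Finset.sum_ite_irrel]

theorem ActsTriviallyAt.apply_update_update {j : Fin N} {Z : BigM n N} (hZ : ActsTriviallyAt j Z)
    (a b : Fin n) (p q : Fin N → Fin n) (v w : Fin n) :
    Z (a, Function.update p j v) (b, Function.update q j w)
      = if v = w then Z (a, p) (b, Function.update q j (p j)) else 0 := by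
  have hunit : ∀ (v' w' : Fin n) (p q : Fin N → Fin n),
      Z (a, p) (b, Function.update q j v') * (if w' = q j then 1 else 0)
        = (if v' = p j then 1 else 0) * Z (a, Function.update p j w') (b, q) := by
    intro v' w' p q
    have h := congrFun (congrFun (hZ (single v' w' 1)) (a, p)) (b, q)
    simpa [mul_aux0J_one_kronecker_apply, aux0J_one_kronecker_mul_apply, single, ite_and,
      eq_comm] using h
  split_ifs with hvw
  · simpa [hvw] using (hunit (p j) w p (Function.update q j w)).symm
  · simpa [Ne.symm hvw] using hunit w w (Function.update p j v) (Function.update q j w)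

theorem ActsTriviallyAt.ptrA_apply_of_ne {j : Fin N} {Z : BigM n N} (hZ : ActsTriviallyAt j Z)
    {p q : Fin N → Fin n} (hpq : p j ≠ q j) : ptrA Z p q = 0 := by
  rw [ptrA, of_apply]
  exact Finset.sum_eq_zero fun a _ => by
    simpa [hpq] using hZ.apply_update_update a a p q (p j) (q j)

theorem ActsTriviallyAt.aux0J_mul_mul_aux0J_apply {j : Fin N} {Z : BigM n N}
    (hZ : ActsTriviallyAt j Z) (A B : Sq n) (a a' : Fin n) (p q : Fin N → Fin n) :
    (aux0J j A * Z * aux0J j B) (a, p) (a', q)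
      = (A * (of fun b c => Z (b, p) (c, Function.update q j (p j)) : MatV n) ⊗ₖ (1 : MatV n) * B)
          (a, p j) (a', q j) := by
  rw [mul_assoc, aux0J_mul_apply]
  simp only [mul_aux0J_apply]
  simp only [hZ.apply_update_update, mul_apply, Fintype.sum_prod_type, kroneckerMap_apply,
    of_apply, one_apply, ite_mul, zero_mul, mul_ite, mul_one, mul_zero, Finset.sum_ite_eq,
    Finset.sum_ite_eq', Finset.mem_univ, if_true, Finset.mul_sum, Finset.sum_mul]
  refine (Finset.sum_congr rfl fun _ _ => Finset.sum_comm).trans ?_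
  rw [Finset.sum_comm]
  refine Finset.sum_congr rfl fun _ _ => ?_
  rw [Finset.sum_comm]
  exact Finset.sum_congr rfl fun _ _ => Finset.sum_congr rfl fun _ _ => (mul_assoc ..).symm

theorem ActsTriviallyAt.ptrA_aux0J_rtil_mul_mul_aux0J {j : Fin N} {Z : BigM n N}
    (hZ : ActsTriviallyAt j Z) {S : Sq n} (hS : IsUnit (pt1 S)) :
    ptrA (aux0J j (rtil S) * Z * aux0J j S) = ptrA Z := by
  ext p q
  have h := congrFun (congrFun (ptr0_rtil_mul_kronecker_one_mul hS
    (of fun b c => Z (b, p) (c, Function.update q j (p j)))) (p j)) (q j)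
  simp only [ptr0, of_apply] at h
  simp only [ptrA, of_apply, hZ.aux0J_mul_mul_aux0J_apply, h]
  by_cases hpq : p j = q j
  · simp [hpq, trace]
  · simpa [hpq, ptrA] using (hZ.ptrA_apply_of_ne hpq).symm

theorem actsTriviallyAt_aux0 (j : Fin N) (W : MatV n) : ActsTriviallyAt j (aux0 W) := by
  intro K
  rw [← aux0J_kronecker_one j W, Commute, SemiconjBy, ← aux0J_mul, ← aux0J_mul,
    ← mul_kronecker_mul, ← mul_kronecker_mul, mul_one, one_mul, one_mul, mul_one]

theorem actsTriviallyAt_aux0J {i j : Fin N} (hij : i ≠ j) (X : Sq n) :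
    ActsTriviallyAt j (aux0J i X) := by
  intro K
  ext ⟨a, p⟩ ⟨b, q⟩
  rw [mul_aux0J_one_kronecker_apply, aux0J_one_kronecker_mul_apply]
  simp only [aux0J, of_apply, forall_ne_eq_update_iff_of_ne hij,
    forall_ne_update_eq_iff_of_ne hij, Function.update_of_ne hij, ite_and, ite_mul, zero_mul,
    mul_ite, mul_zero, Finset.sum_ite_eq, Finset.sum_ite_eq', Finset.mem_univ, if_true]
  split_ifs <;> ring

theorem ActsTriviallyAt.mul {j : Fin N} {Z₁ Z₂ : BigM n N} (h₁ : ActsTriviallyAt j Z₁)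
    (h₂ : ActsTriviallyAt j Z₂) : ActsTriviallyAt j (Z₁ * Z₂) :=
  fun K => (h₁ K).mul_left (h₂ K)

theorem actsTriviallyAt_list_prod {j : Fin N} {l : List (BigM n N)}
    (h : ∀ Z ∈ l, ActsTriviallyAt j Z) : ActsTriviallyAt j l.prod :=
  fun K => Commute.list_prod_left _ _ fun Z hZ => h Z hZ K

theorem actsTriviallyAt_pasc {j : Fin N} {k : ℕ} {f : Fin k → BigM n N}
    (h : ∀ i, ActsTriviallyAt j (f i)) : ActsTriviallyAt j (pasc f) :=
  actsTriviallyAt_list_prod fun _ hZ => by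
    obtain ⟨i, rfl⟩ := List.mem_ofFn.mp hZ
    exact h i

theorem actsTriviallyAt_pdesc {j : Fin N} {k : ℕ} {f : Fin k → BigM n N}
    (h : ∀ i, ActsTriviallyAt j (f i)) : ActsTriviallyAt j (pdesc f) :=
  actsTriviallyAt_list_prod fun _ hZ => by
    obtain ⟨i, rfl⟩ := List.mem_ofFn.mp (List.mem_reverse.mp hZ)
    exact h i

theorem ptrA_pasc_rtil_mul_aux0_mul_pdesc {k : ℕ} (idx : Fin k → Fin N)
    (hidx : Function.Injective idx) (S : Fin k → Sq n) (hS : ∀ i, IsUnit (pt1 (S i)))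
    (W : MatV n) :
    ptrA (pasc (fun i => aux0J (idx i) (rtil (S i))) * aux0 W
      * pdesc (fun i => aux0J (idx i) (S i))) = trace W • 1 := by
  induction k with
  | zero =>
    ext p q
    simp [pasc_zero, pdesc_zero, ptrA, aux0, one_apply, trace]
  | succ k ih =>
    have hZ : ActsTriviallyAt (idx 0)
        (pasc (fun i : Fin k => aux0J (idx i.succ) (rtil (S i.succ))) * aux0 W
          * pdesc (fun i : Fin k => aux0J (idx i.succ) (S i.succ))) :=
      ((actsTriviallyAt_pasc fun i => actsTriviallyAt_aux0J (hidx.ne i.succ_ne_zero) _).mul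
        (actsTriviallyAt_aux0 _ W)).mul
        (actsTriviallyAt_pdesc fun i => actsTriviallyAt_aux0J (hidx.ne i.succ_ne_zero) _)
    rw [pasc_succ, pdesc_succ, ← ih (fun i => idx i.succ) (hidx.comp (Fin.succ_injective _)) _
      (fun i => hS i.succ), ← hZ.ptrA_aux0J_rtil_mul_mul_aux0J (hS 0)]
    simp only [mul_assoc]

end Chain

theorem Tbdy_eq_smul_trace_of_crossing {n N : ℕ} (R : ℂ → Sq n) (Kpr Km : ℂ → MatV n)
    (M : MatV n) (r : ℂ) (z : Fin N → ℂ) (hRinv : ∀ x, IsUnit (R x))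
    (hRt1 : ∀ x, IsUnit (pt1 (R x))) (hM : IsUnit M)
    (hcross : ∀ x : ℂ, ∃ c : ℂ, c ≠ 0 ∧
      (k2M M)⁻¹ * (R (r ^ 2 * x))⁻¹ * k2M M = c • rtil (R x))
    (hRMM : ∀ x, Commute (R x) (M ⊗ₖ M)) {x : ℂ} (hx : x⁻¹ = r ^ 2 * x)
    (hK : ∃ c : ℂ, c ≠ 0 ∧ Kpr x = c • M) :
    ∃ c : ℂ, c ≠ 0 ∧ Tbdy R Kpr Km z x = c • (trace (Km x * M) • (1 : StM n N)) := by
  obtain ⟨cK, hcK, hKx⟩ := hK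
  have hinv : ∀ y, ∃ c : ℂ, c ≠ 0 ∧
      (R (r ^ 2 * y))⁻¹ = c • (M⁻¹ ⊗ₖ 1 * rtil (R y) * M ⊗ₖ 1) := fun y =>
    (hcross y).imp fun _ ⟨hc, h⟩ => ⟨hc, inv_eq_smul_conj_rtil hM (hRMM _) h⟩
  choose c hc hconj using fun i : Fin N => hinv (x / z i)
  have hMd := (isUnit_iff_isUnit_det M).mp hM
  have hMM' : aux0 (N := N) M * aux0 M⁻¹ = 1 := by
    rw [← aux0_mul, mul_nonsing_inv _ hMd, aux0_eq_kronecker, one_kronecker_one]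
  have hM'M : aux0 (N := N) M⁻¹ * aux0 M = 1 := by
    rw [← aux0_mul, nonsing_inv_mul _ hMd, aux0_eq_kronecker, one_kronecker_one]
  -- `(x z_i)⁻¹ = r² (x / z_i)`, so crossing symmetry applies to every factor
  have hfactor : ∀ i, (aux0J i (R (x * z i)⁻¹))⁻¹
      = c i • (aux0 M⁻¹ * aux0J i (rtil (R (x / z i))) * aux0 M) := by
    intro i
    rw [aux0J_inv (hRinv _), mul_inv, hx, mul_assoc, ← div_eq_mul_inv, hconj, aux0J_smul,
      aux0J_mul, aux0J_mul, aux0J_kronecker_one, aux0J_kronecker_one]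
  refine ⟨cK * ∏ i, c i, mul_ne_zero hcK (Finset.prod_ne_zero_iff.mpr fun i _ => hc i), ?_⟩
  rw [Tbdy, funext hfactor, pasc_smul, pasc_conj hM'M hMM', hKx, trace_mul_comm,
    ← ptrA_pasc_rtil_mul_aux0_mul_pdesc (fun i => i) Function.injective_id
      (fun i => R (x / z i)) (fun i => hRt1 _), ← ptrA_smul]
  congr 1
  simp only [aux0_smul, aux0_mul, smul_mul_assoc, mul_smul_comm, smul_smul, ← mul_assoc, hMM',
    one_mul]
  rw [mul_comm]

theorem stmt17_general (n N : ℕ) (R : ℂ → Sq n) (Kpr Km : ℂ → MatV n) (M : MatV n) (r : ℂ)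
    (z : Fin N → ℂ)
    (hRinv : ∀ x : ℂ, IsUnit (R x))
    (hRt1 : ∀ x : ℂ, IsUnit (pt1 (R x)))
    (hM : IsUnit M)
    (hcross : ∀ x : ℂ, ∃ c : ℂ, c ≠ 0 ∧
      (k2M M)⁻¹ * (R (r ^ 2 * x))⁻¹ * k2M M = c • rtil (R x))
    (hRMM : ∀ x : ℂ, R x * (M ⊗ₖ M) = (M ⊗ₖ M) * R x)
    (hK1 : ∃ c : ℂ, c ≠ 0 ∧ Kpr r⁻¹ = c • M)
    (hK2 : ∃ c : ℂ, c ≠ 0 ∧ Kpr (-r⁻¹) = c • M) :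
    (∃ c : ℂ, c ≠ 0 ∧
      Tbdy R Kpr Km z r⁻¹ = c • (Matrix.trace (Km r⁻¹ * M) • (1 : StM n N))) ∧
    (∃ c : ℂ, c ≠ 0 ∧
      Tbdy R Kpr Km z (-r⁻¹) = c • (Matrix.trace (Km (-r⁻¹) * M) • (1 : StM n N))) := by
  have hx : (r⁻¹)⁻¹ = r ^ 2 * r⁻¹ := by
    rcases eq_or_ne r 0 with rfl | hr
    · simp
    · field_simp
  have hx' : (-r⁻¹)⁻¹ = r ^ 2 * -r⁻¹ := by rw [inv_neg, hx, mul_neg]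
  exact ⟨Tbdy_eq_smul_trace_of_crossing R Kpr Km M r z hRinv hRt1 hM hcross hRMM hx hK1,
    Tbdy_eq_smul_trace_of_crossing R Kpr Km M r z hRinv hRt1 hM hcross hRMM hx' hK2⟩

/-- under crossing symmetry and `K'(±r⁻¹) ∝ M`, the boundary transfer matrix at
`x = ±r⁻¹` is proportional to `Tr(K⁻(±r⁻¹) M) · Id`. -/
theorem stmt17 (n N : ℕ) (R : ℂ → Sq n) (Kpr Km : ℂ → MatV n) (M : MatV n) (r : ℂ)
    (z : Fin N → ℂ)
    (hRinv : ∀ x : ℂ, IsUnit (R x))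
    (hRt1 : ∀ x : ℂ, IsUnit (pt1 (R x)))
    (hM : IsUnit M)
    (hr : r ≠ 0)
    (hz : ∀ i, z i ≠ 0)
    (hcross : ∀ x : ℂ, ∃ c : ℂ, c ≠ 0 ∧
      (k2M M)⁻¹ * (R (r ^ 2 * x))⁻¹ * k2M M = c • rtil (R x))
    (hRMM : ∀ x : ℂ, R x * (M ⊗ₖ M) = (M ⊗ₖ M) * R x)
    (hK1 : ∃ c : ℂ, c ≠ 0 ∧ Kpr r⁻¹ = c • M)
    (hK2 : ∃ c : ℂ, c ≠ 0 ∧ Kpr (-r⁻¹) = c • M) :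
    (∃ c : ℂ, c ≠ 0 ∧
      Tbdy R Kpr Km z r⁻¹ = c • (Matrix.trace (Km r⁻¹ * M) • (1 : StM n N))) ∧
    (∃ c : ℂ, c ≠ 0 ∧
      Tbdy R Kpr Km z (-r⁻¹) = c • (Matrix.trace (Km (-r⁻¹) * M) • (1 : StM n N))) :=
  stmt17_general n N R Kpr Km M r z hRinv hRt1 hM hcross hRMM hK1 hK2
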